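/- arXiv:math/0610195 — 4 statements merged into one kernel-verified Lean document; each statement's English description precedes it below -/
import Mathlib

section
/- Countable chain condition for the Cohen algebra (7.6(3)): Let x be any set and let C(x,2) be the set of finite partial functions from x to the two-element set {0,1}. If S ⊆ C(x,2) is a set any two distinct members of which are incompatible (i.e., disagree at some point of the intersection of their domains), then S is at most countable. -/
open Set

private lemma cohen_aux {α : Type*} (n : ℕ) :
    ∀ (S : Set (α → Option Bool)),
      (∀ f ∈ S, {a : α | f a ≠ none}.Finite) →
      (∀ f ∈ S, {a : α | f a ≠ none}.ncard ≤ n) →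
      (∀ f ∈ S, ∀ g ∈ S, f ≠ g →
        ∃ (a : α) (b b' : Bool), f a = some b ∧ g a = some b' ∧ b ≠ b') →
      S.Countable := by
  induction n with
  | zero =>
    intro S hfin hcard _
    refine Set.Subsingleton.countable ?_
    intro f hf g hg
    have hf0 : {a : α | f a ≠ none} = ∅ :=
      (Set.ncard_eq_zero (hfin f hf)).mp (Nat.le_zero.mp (hcard f hf))
    have hg0 : {a : α | g a ≠ none} = ∅ :=
      (Set.ncard_eq_zero (hfin g hg)).mp (Nat.le_zero.mp (hcard g hg))
    funext a
    have h1 : f a = none := by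
      by_contra h; exact absurd (hf0 ▸ h : a ∈ (∅ : Set α)) (Set.notMem_empty a)
    have h2 : g a = none := by
      by_contra h; exact absurd (hg0 ▸ h : a ∈ (∅ : Set α)) (Set.notMem_empty a)
    rw [h1, h2]
  | succ n ih =>
    intro S hfin hcard hanti
    rcases S.eq_empty_or_nonempty with rfl | ⟨p, hp⟩
    · exact countable_empty
    classical
    have hsub : S ⊆ insert p (⋃ a ∈ (hfin p hp).toFinset,
        ⋃ b : Bool, {q ∈ S | q a = some b}) := by
      intro q hq
      by_cases hqp : q = p
      · simp [hqp]
      · obtain ⟨a, b, b', hqa, hpa, hbb⟩ := hanti q hq p hp hqp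
        refine mem_insert_iff.mpr (Or.inr ?_)
        simp only [mem_iUnion]
        exact ⟨a, by simp [hpa], b, hq, hqa⟩
    refine Countable.mono hsub ?_
    refine Countable.insert p ?_
    refine Countable.biUnion ((hfin p hp).toFinset : Finset α).countable_toSet ?_
    intro a _
    refine countable_iUnion ?_
    intro b
    set T : Set (α → Option Bool) := {q ∈ S | q a = some b} with hT
    set r : (α → Option Bool) → (α → Option Bool) :=
      fun q => Function.update q a none with hr
    have hsupp : ∀ q : α → Option Bool,
        {x : α | r q x ≠ none} = {x : α | q x ≠ none} \ {a} := by
      intro q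
      ext x
      by_cases hx : x = a <;> simp [hr, Function.update, hx]
    have hinj : Set.InjOn r T := by
      intro q hq q' hq' heq
      funext c
      by_cases hc : c = a
      · rw [hc, hq.2, hq'.2]
      · have := congrFun heq c
        simpa [hr, Function.update_of_ne hc] using this
    refine countable_of_injective_of_countable_image hinj ?_
    refine ih (r '' T) ?_ ?_ ?_
    · rintro f ⟨q, hq, rfl⟩
      rw [hsupp q]
      exact ((hfin q hq.1).diff)
    · rintro f ⟨q, hq, rfl⟩
      rw [hsupp q]
      have hmem : a ∈ {x : α | q x ≠ none} := by simp [hq.2]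
      have := Set.ncard_diff_singleton_add_one hmem (hfin q hq.1)
      have hle := hcard q hq.1
      omega
    · rintro f ⟨q, hq, rfl⟩ g ⟨q', hq', rfl⟩ hne
      have hqq : q ≠ q' := fun h => hne (by rw [h])
      obtain ⟨c, b1, b2, hc1, hc2, hb⟩ := hanti q hq.1 q' hq'.1 hqq
      have hca : c ≠ a := by
        rintro rfl
        rw [hq.2] at hc1; rw [hq'.2] at hc2
        exact hb ((Option.some_injective _ hc1.symm).trans
          (Option.some_injective _ hc2.symm).symm ▸ rfl)
      exact ⟨c, b1, b2, by simp [hr, Function.update_of_ne hca, hc1],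
        by simp [hr, Function.update_of_ne hca, hc2], hb⟩

/-- Countable chain condition for the Cohen algebra (7.6(3)): any set of finite partial
functions from `α` to `Bool` that is pairwise incompatible (any two distinct members
disagree at some point of the intersection of their domains) is at most countable. -/
theorem cohen_algebra_ccc {α : Type*} (S : Set (α → Option Bool))
    (h_fin : ∀ f ∈ S, {a : α | f a ≠ none}.Finite)
    (h_anti : ∀ f ∈ S, ∀ g ∈ S, f ≠ g →
      ∃ (a : α) (b b' : Bool), f a = some b ∧ g a = some b' ∧ b ≠ b') :
    S.Countable := by
  have hsub : S ⊆ ⋃ n : ℕ, {f ∈ S | {a : α | f a ≠ none}.ncard ≤ n} := by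
    intro f hf
    exact mem_iUnion.mpr ⟨{a : α | f a ≠ none}.ncard, hf, le_refl _⟩
  refine Countable.mono hsub (countable_iUnion fun n => ?_)
  refine cohen_aux n _ (fun f hf => h_fin f hf.1) (fun f hf => hf.2) ?_
  intro f hf g hg hne
  exact h_anti f hf.1 g hg.1 hne
end

section
/- Cardinality of the Cohen algebra (7.6(4)): Let x be an infinite set with |x| = κ. Let P := C(x,2) be the set of finite partial functions from x to {0,1}, and for A ⊆ P define the polar A^⊥ := {q ∈ P | q is incompatible with every p ∈ A}. Then κ ≤ |{A^⊥ : A ⊆ P}| ≤ κ^{ℵ₀}; i.e., the Boolean completion B(x,2) of C(x,2), realized as the set of all polars, has cardinality between |x| and |x|^{ℵ₀}. -/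
universe u

/-- The type of finite partial functions from `α` to `Bool` (i.e. `C(x, 2)`). -/
def FinPartFun (α : Type u) : Type u :=
  {f : α → Option Bool // {a : α | f a ≠ none}.Finite}

/-- Incompatibility of finite partial functions: they disagree at some common point. -/
def FinPartFun.Incompat {α : Type u} (f g : FinPartFun α) : Prop :=
  ∃ (a : α) (b b' : Bool), f.1 a = some b ∧ g.1 a = some b' ∧ b ≠ b'

/-- The polar `A^⊥` of a set of finite partial functions: all elements incompatible with
every member of `A`. -/
def FinPartFun.polar {α : Type u} (A : Set (FinPartFun α)) : Set (FinPartFun α) :=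
  {q | ∀ p ∈ A, FinPartFun.Incompat q p}

namespace FinPartFun

variable {α : Type u}

open Classical in
lemma incompat_symm {f g : FinPartFun α} (h : Incompat f g) : Incompat g f := by
  obtain ⟨a, b, b', h1, h2, h3⟩ := h
  exact ⟨a, b', b, h2, h1, fun e => h3 e.symm⟩

lemma not_incompat_self (f : FinPartFun α) : ¬ Incompat f f := by
  rintro ⟨a, b, b', h1, h2, h3⟩
  rw [h1] at h2
  exact h3 (Option.some_injective _ h2)

lemma polar_anti {A B : Set (FinPartFun α)} (h : A ⊆ B) : polar B ⊆ polar A :=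
  fun _ hq p hp => hq p (h hp)

lemma subset_polar_polar (A : Set (FinPartFun α)) : A ⊆ polar (polar A) :=
  fun p hp q hq => incompat_symm (hq p hp)

lemma polar_polar_polar (A : Set (FinPartFun α)) : polar (polar (polar A)) = polar A :=
  Set.Subset.antisymm (polar_anti (subset_polar_polar A)) (subset_polar_polar (polar A))

/-- `t` extends `f`. -/
def Extends (t f : FinPartFun α) : Prop := ∀ a b, f.1 a = some b → t.1 a = some b

lemma incompat_of_extends {t f g : FinPartFun α} (ht : Extends t f) (h : Incompat f g) :
    Incompat t g := by
  obtain ⟨a, b, b', h1, h2, h3⟩ := h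
  exact ⟨a, b, b', ht a b h1, h2, h3⟩

/-- The union of two compatible conditions. -/
noncomputable def union (f g : FinPartFun α) : FinPartFun α :=
  ⟨fun a => (f.1 a).elim (g.1 a) some, by
    apply Set.Finite.subset (f.2.union g.2)
    intro a ha
    simp only [Set.mem_setOf_eq] at ha
    rcases hf : f.1 a with _ | b
    · rw [hf] at ha; exact Or.inr ha
    · exact Or.inl (by simp [hf])⟩

lemma union_extends_left (f g : FinPartFun α) : Extends (union f g) f := by
  intro a b h
  simp [union, h]

lemma union_extends_right {f g : FinPartFun α} (h : ¬ Incompat f g) :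
    Extends (union f g) g := by
  intro a b hb
  rcases hf : f.1 a with _ | b'
  · simp [union, hf, hb]
  · have : b' = b := by
      by_contra hne
      exact h ⟨a, b', b, hf, hb, hne⟩
    simp [union, hf, this]

/-- support as a finset -/
noncomputable def supp (f : FinPartFun α) : Finset α := f.2.toFinset

lemma mem_supp {f : FinPartFun α} {a : α} : a ∈ f.supp ↔ f.1 a ≠ none := by
  simp [supp, Set.Finite.mem_toFinset]


open Classical in
/-- erase a point from the domain -/
noncomputable def erasePt (f : FinPartFun α) (a : α) : FinPartFun α :=
  ⟨Function.update f.1 a none, by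
    apply Set.Finite.subset f.2
    intro c hc
    simp only [Set.mem_setOf_eq] at hc ⊢
    by_cases h : c = a
    · subst h; simp [Function.update_self] at hc
    · rwa [Function.update_of_ne h] at hc⟩

open Classical in
lemma erasePt_apply_ne {c a : α} (h : c ≠ a) (f : FinPartFun α) :
    (f.erasePt a).1 c = f.1 c := Function.update_of_ne h _ _

open Classical in
lemma erasePt_apply_self (f : FinPartFun α) (a : α) :
    (f.erasePt a).1 a = none := by simp [erasePt]

lemma bool_ne {b v : Bool} (h : b ≠ v) : b = !v := by cases b <;> cases v <;> simp_all

open Classical in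
lemma antichain_finite_of_card_le (n : ℕ) (W : Set (FinPartFun α))
    (hp : W.Pairwise Incompat) (hs : ∀ p ∈ W, p.supp.card ≤ n) : W.Finite := by
  induction n generalizing W with
  | zero =>
    apply Set.Subsingleton.finite
    intro p hpW q hqW
    by_contra hne
    obtain ⟨a, b, b', h1, h2, h3⟩ := hp hpW hqW hne
    have : a ∈ p.supp := mem_supp.2 (by simp [h1])
    have hcard := hs p hpW
    rw [Finset.card_eq_zero.1 (Nat.le_zero.1 hcard)] at this
    exact absurd this (Finset.notMem_empty a)
  | succ n ih =>
    rcases Set.eq_empty_or_nonempty W with h | ⟨p₀, hp₀⟩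
    · simp [h]
    have hcover : W ⊆ insert p₀ (⋃ a ∈ p₀.supp,
        {q | q ∈ W ∧ ∃ b v, q.1 a = some b ∧ p₀.1 a = some v ∧ b ≠ v}) := by
      intro q hq
      by_cases hqp : q = p₀
      · exact Set.mem_insert_iff.2 (Or.inl hqp)
      obtain ⟨a, b, b', h1, h2, h3⟩ := hp hq hp₀ hqp
      refine Set.mem_insert_iff.2 (Or.inr ?_)
      exact Set.mem_biUnion (mem_supp.2 (by simp [h2])) ⟨hq, b, b', h1, h2, h3⟩
    refine Set.Finite.subset (Set.Finite.insert p₀ (Set.Finite.biUnion p₀.supp.finite_toSet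
      fun a _ => ?_)) hcover
    have hinj : Set.InjOn (fun q => erasePt q a)
        {q | q ∈ W ∧ ∃ b v, q.1 a = some b ∧ p₀.1 a = some v ∧ b ≠ v} := by
      rintro q ⟨hqW, b, v, hq1, hv, hbv⟩ q' ⟨hqW', b', v', hq1', hv', hbv'⟩ he
      have hvv : v = v' := by
        rw [hv] at hv'; exact Option.some_injective _ hv'
      apply Subtype.ext
      funext c
      by_cases hc : c = a
      · subst hc
        rw [hq1, hq1', bool_ne hbv, bool_ne hbv', hvv]
      · have := congrArg (fun t : FinPartFun α => t.1 c) he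
        simpa [erasePt_apply_ne hc] using this
    apply Set.Finite.of_finite_image _ hinj
    apply ih
    · rintro x ⟨q, hq, rfl⟩ y ⟨q', hq', rfl⟩ hxy
      obtain ⟨hqW, b₁, v, hq1, hv, hbv⟩ := hq
      obtain ⟨hqW', b₁', v', hq1', hv', hbv'⟩ := hq'
      have hqne : q ≠ q' := fun h => hxy (by rw [h])
      obtain ⟨c, b, b', h1, h2, h3⟩ := hp hqW hqW' hqne
      have hca : c ≠ a := by
        rintro rfl
        rw [hq1] at h1
        rw [hq1'] at h2
        obtain rfl : b₁ = b := Option.some_injective _ h1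
        obtain rfl : b₁' = b' := Option.some_injective _ h2
        have hvv : v = v' := by rw [hv] at hv'; exact Option.some_injective _ hv'
        rw [bool_ne hbv, bool_ne hbv', hvv] at h3
        exact h3 rfl
      exact ⟨c, b, b', by rw [show ((fun q => erasePt q a) q : FinPartFun α) = erasePt q a from rfl,
          erasePt_apply_ne hca]; exact h1,
        by rw [show ((fun q => erasePt q a) q' : FinPartFun α) = erasePt q' a from rfl,
          erasePt_apply_ne hca]; exact h2, h3⟩
    · rintro x ⟨q, hq, rfl⟩
      obtain ⟨hqW, b, v, hq1, hv, hbv⟩ := hq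
      show (erasePt q a).supp.card ≤ n
      have hsub : (erasePt q a).supp ⊆ q.supp.erase a := by
        intro c hc
        rw [mem_supp] at hc
        by_cases h : c = a
        · subst h; rw [erasePt_apply_self] at hc; exact absurd rfl hc
        · rw [Finset.mem_erase]
          refine ⟨h, mem_supp.2 ?_⟩
          rwa [erasePt_apply_ne h] at hc
      have hamem : a ∈ q.supp := mem_supp.2 (by simp [hq1])
      have h1 := Finset.card_le_card hsub
      rw [Finset.card_erase_of_mem hamem] at h1
      have h2 := hs q hqW
      omega

lemma antichain_countable {W : Set (FinPartFun α)} (hp : W.Pairwise Incompat) :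
    W.Countable := by
  have : W ⊆ ⋃ n : ℕ, {p ∈ W | p.supp.card ≤ n} := by
    intro p hpW
    exact Set.mem_iUnion.2 ⟨p.supp.card, hpW, le_refl _⟩
  refine Set.Countable.mono this (Set.countable_iUnion fun n => Set.Finite.countable ?_)
  exact antichain_finite_of_card_le n _ (hp.mono (fun p hpp => hpp.1)) (fun p hpp => hpp.2)

lemma exists_maximal_antichain (T : Set (FinPartFun α)) :
    ∃ W ⊆ T, W.Pairwise Incompat ∧ ∀ t ∈ T, (∀ w ∈ W, Incompat t w) → t ∈ W := by
  obtain ⟨W, hW⟩ := zorn_subset {W : Set (FinPartFun α) | W ⊆ T ∧ W.Pairwise Incompat}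
    (fun c hc hchain => by
      refine ⟨⋃₀ c, ⟨?_, ?_⟩, fun s hs => Set.subset_sUnion_of_mem hs⟩
      · exact Set.sUnion_subset fun s hs => (hc hs).1
      · intro x hx y hy hxy
        obtain ⟨s, hs, hxs⟩ := hx
        obtain ⟨s', hs', hys⟩ := hy
        rcases hchain.total hs hs' with h | h
        · exact (hc hs').2 (h hxs) hys hxy
        · exact (hc hs).2 hxs (h hys) hxy)
  refine ⟨W, hW.prop.1, hW.prop.2, fun t ht hinc => ?_⟩
  have : insert t W ∈ {W : Set (FinPartFun α) | W ⊆ T ∧ W.Pairwise Incompat} := by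
    constructor
    · exact Set.insert_subset ht hW.prop.1
    · intro x hx y hy hxy
      rcases hx with rfl | hx
      · rcases hy with rfl | hy
        · exact absurd rfl hxy
        · exact hinc y hy
      · rcases hy with rfl | hy
        · exact incompat_symm (hinc x hx)
        · exact hW.prop.2 hx hy hxy
  have hle := hW.2 this (Set.subset_insert t W)
  exact hle (Set.mem_insert t W)

/-- Every polar is the polar of a countable set. -/
lemma exists_countable_polar (A : Set (FinPartFun α)) :
    ∃ W : Set (FinPartFun α), W.Countable ∧ polar W = polar A := by
  obtain ⟨W, hWT, hWp, hWmax⟩ := exists_maximal_antichain (polar (polar A))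
  refine ⟨W, antichain_countable hWp, ?_⟩
  apply Set.Subset.antisymm
  · -- polar W ⊆ polar A
    rw [← polar_polar_polar A]
    intro q hq r hr
    by_contra hqr
    set t := union q r with ht
    have htq : Extends t q := union_extends_left q r
    have htr : Extends t r := union_extends_right hqr
    have htT : t ∈ polar (polar A) := fun s hs => incompat_of_extends htr (hr s hs)
    have hall : ∀ w ∈ W, Incompat t w := fun w hw => incompat_of_extends htq (hq w hw)
    have htW : t ∈ W := hWmax t htT hall
    exact not_incompat_self t (hall t htW)
  · -- polar A ⊆ polar W
    intro s hs w hw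
    exact incompat_symm (hWT hw s hs)


open Classical in
/-- The condition with a single point in its domain. -/
noncomputable def sing (a : α) (b : Bool) : FinPartFun α :=
  ⟨fun x => if x = a then some b else none, by
    apply Set.Finite.subset (Set.finite_singleton a)
    intro c hc
    simp only [Set.mem_setOf_eq] at hc
    by_cases h : c = a
    · simp [h]
    · simp [h] at hc⟩

open Classical in
lemma sing_apply_self (a : α) (b : Bool) : (sing a b).1 a = some b := by simp [sing]

open Classical in
lemma sing_apply_ne {a c : α} (h : c ≠ a) (b : Bool) : (sing a b).1 c = none := by
  simp [sing, h]

lemma mk_le_polar :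
    Cardinal.mk α ≤
      Cardinal.mk {S : Set (FinPartFun α) // ∃ A : Set (FinPartFun α), S = polar A} := by
  apply Cardinal.mk_le_of_injective
    (f := fun a => (⟨polar {sing a true}, ⟨{sing a true}, rfl⟩⟩ :
      {S : Set (FinPartFun α) // ∃ A : Set (FinPartFun α), S = polar A}))
  intro a a' h
  by_contra hne
  have h1 : sing a false ∈ polar {sing a true} := by
    intro p hp
    rw [Set.mem_singleton_iff] at hp
    subst hp
    exact ⟨a, false, true, sing_apply_self a false, sing_apply_self a true, by simp⟩
  have h2 : sing a false ∈ polar {sing a' true} := by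
    have := congrArg Subtype.val h
    simp only at this
    rwa [this] at h1
  obtain ⟨c, b, b', hc1, hc2, hne'⟩ := h2 (sing a' true) rfl
  by_cases hca : c = a
  · subst hca
    rw [sing_apply_ne hne true] at hc2
    cases hc2
  · rw [sing_apply_ne hca false] at hc1
    cases hc1

lemma polar_le_pow :
    Cardinal.mk {S : Set (FinPartFun α) // ∃ A : Set (FinPartFun α), S = polar A} ≤
      Cardinal.mk (ULift.{u} ℕ → Option (FinPartFun α)) := by
  have key : ∀ x : {S : Set (FinPartFun α) // ∃ A : Set (FinPartFun α), S = polar A},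
      ∃ g : ULift.{u} ℕ → Option (FinPartFun α),
        x.1 = polar {p | ∃ n, g n = some p} := by
    rintro ⟨S, A, rfl⟩
    obtain ⟨W, hWc, hWp⟩ := exists_countable_polar A
    rcases Set.eq_empty_or_nonempty W with hW | hW
    · refine ⟨fun _ => none, ?_⟩
      have : {p : FinPartFun α | ∃ n : ULift.{u} ℕ, (none : Option (FinPartFun α)) = some p}
          = W := by
        rw [hW]
        ext p
        simp
      rw [this, hWp]
    · obtain ⟨f, hf⟩ := hWc.exists_eq_range hW
      refine ⟨fun n => some (f n.down), ?_⟩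
      have : {p : FinPartFun α | ∃ n : ULift.{u} ℕ, some (f n.down) = some p} = W := by
        rw [hf]
        ext p
        constructor
        · rintro ⟨n, hn⟩
          exact ⟨n.down, Option.some_injective _ hn⟩
        · rintro ⟨m, hm⟩
          exact ⟨ULift.up m, by rw [hm]⟩
      rw [this, hWp]
  choose g hg using key
  apply Cardinal.mk_le_of_injective (f := g)
  intro x y hxy
  apply Subtype.ext
  rw [hg x, hg y, hxy]

lemma mk_finPartFun_le : Cardinal.mk (FinPartFun α) ≤ Cardinal.mk (Finset α × Finset α) := by
  have htr : ∀ p : FinPartFun α, {a | p.1 a = some true}.Finite := fun p =>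
    p.2.subset (fun a ha => by simp only [Set.mem_setOf_eq] at ha ⊢; rw [ha]; simp)
  have hfl : ∀ p : FinPartFun α, {a | p.1 a = some false}.Finite := fun p =>
    p.2.subset (fun a ha => by simp only [Set.mem_setOf_eq] at ha ⊢; rw [ha]; simp)
  apply Cardinal.mk_le_of_injective (f := fun p => ((htr p).toFinset, (hfl p).toFinset))
  intro p q h
  have h1 : {a | p.1 a = some true} = {a | q.1 a = some true} := by
    have := congrArg Prod.fst h
    simp only at this
    rw [← Set.Finite.coe_toFinset (htr p), ← Set.Finite.coe_toFinset (htr q), this]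
  have h2 : {a | p.1 a = some false} = {a | q.1 a = some false} := by
    have := congrArg Prod.snd h
    simp only at this
    rw [← Set.Finite.coe_toFinset (hfl p), ← Set.Finite.coe_toFinset (hfl q), this]
  apply Subtype.ext
  funext a
  have e1 := Set.ext_iff.1 h1 a
  have e2 := Set.ext_iff.1 h2 a
  simp only [Set.mem_setOf_eq] at e1 e2
  rcases hpa : p.1 a with _ | b
  · rcases hqa : q.1 a with _ | b'
    · rfl
    · cases b'
      · rw [hpa] at e2; rw [hqa] at e2; simp at e2
      · rw [hpa] at e1; rw [hqa] at e1; simp at e1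
  · cases b
    · rw [hpa] at e2; exact (e2.1 rfl).symm
    · rw [hpa] at e1; exact (e1.1 rfl).symm

end FinPartFun

/-- Cardinality of the Cohen algebra (7.6(4)): for an infinite set `α` of cardinality `κ`,
the Boolean completion `B(α, 2)` of `C(α, 2)`, realized as the set of all polars, has
cardinality between `κ` and `κ ^ ℵ₀`. -/
theorem cohen_algebra_card {α : Type u} [Infinite α] :
    Cardinal.mk α ≤
        Cardinal.mk {S : Set (FinPartFun α) // ∃ A : Set (FinPartFun α), S = FinPartFun.polar A} ∧
      Cardinal.mk {S : Set (FinPartFun α) // ∃ A : Set (FinPartFun α), S = FinPartFun.polar A} ≤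
        Cardinal.mk α ^ Cardinal.aleph0 := by
  constructor
  · exact FinPartFun.mk_le_polar
  · have hP : Cardinal.mk (FinPartFun α) ≤ Cardinal.mk α := by
      refine le_trans FinPartFun.mk_finPartFun_le ?_
      rw [← Cardinal.mul_def, Cardinal.mk_finset_of_infinite α,
        Cardinal.mul_eq_self (Cardinal.aleph0_le_mk α)]
    have hOpt : Cardinal.mk (Option (FinPartFun α)) ≤ Cardinal.mk α := by
      rw [Cardinal.mk_option]
      calc Cardinal.mk (FinPartFun α) + 1 ≤ Cardinal.mk α + 1 := by gcongr
        _ = Cardinal.mk α := Cardinal.add_one_eq (Cardinal.aleph0_le_mk α)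
    refine le_trans FinPartFun.polar_le_pow ?_
    have harrow : Cardinal.mk (ULift.{u} ℕ → Option (FinPartFun α)) =
        Cardinal.mk (Option (FinPartFun α)) ^ Cardinal.aleph0 := by
      rw [Cardinal.mk_arrow, Cardinal.lift_id, Cardinal.mk_uLift, Cardinal.mk_nat,
        Cardinal.lift_aleph0, Cardinal.lift_aleph0]
    rw [harrow]
    exact Cardinal.power_le_power_right hOpt
end

section
/- Freiling's axiom is equivalent to the negation of the continuum hypothesis (7.6(8)): The statement AX — for every function f assigning to each real number a countable set of real numbers, there exist reals x and y with x ∉ f(y) and y ∉ f(x) — holds if and only if the continuum hypothesis fails, i.e., if and only if ℵ₁ < 2^{ℵ₀}. -/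
/-!
If `ℵ₁ < #α`, take any `S ⊆ α` of size `ℵ₁`: the union of the countable sets `f y`, `y ∈ S`,
has size at most `ℵ₁`, so some `x` lies outside all of them, and since `f x` is countable some
`y ∈ S` lies outside `f x`. If `#α ≤ ℵ₁`, embed `α` into `ω₁` and let `f x` be the set of
`y ≤ x`: it is countable, and any two points are comparable.
-/

open Cardinal Set

universe u

namespace Cardinal

theorem countable_Iic_toType_ord_aleph_one (i : (ℵ₁ : Cardinal.{u}).ord.ToType) :
    (Iic i).Countable := by
  have hω₁ : ℵ₀ ≤ #(ℵ₁ : Cardinal.{u}).ord.ToType := by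
    rw [mk_toType, card_ord]
    exact aleph0_lt_aleph_one.le
  have hlt := mk_Iic_lt i (by rw [mk_toType, card_ord, Ordinal.type_toType]) hω₁
  rwa [mk_toType, card_ord, lt_aleph_one_iff, le_aleph0_iff_set_countable] at hlt

theorem exists_countable_forall_mem_or_mem_of_mk_le_aleph_one {α : Type u} (h : #α ≤ ℵ₁) :
    ∃ f : α → Set α, (∀ x, (f x).Countable) ∧ ∀ x y, x ∈ f y ∨ y ∈ f x := by
  obtain ⟨e⟩ : Nonempty (α ↪ (ℵ₁ : Cardinal.{u}).ord.ToType) := by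
    rwa [← le_def, mk_toType, card_ord]
  refine ⟨fun x ↦ e ⁻¹' Iic (e x), fun x ↦ ?_, fun x y ↦ le_total (e x) (e y)⟩
  exact (countable_Iic_toType_ord_aleph_one (e x)).preimage e.injective

theorem exists_notMem_and_notMem_of_aleph_one_lt_mk {α : Type u} (h : ℵ₁ < #α)
    (f : α → Set α) (hf : ∀ x, (f x).Countable) : ∃ x y, x ∉ f y ∧ y ∉ f x := by
  obtain ⟨S, hS⟩ := le_mk_iff_exists_set.1 h.le
  have hunion : #(⋃ y ∈ S, f y) < #α :=
    calc #(⋃ y ∈ S, f y) ≤ #S * ⨆ y : S, #(f y) := mk_biUnion_le f S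
      _ ≤ ℵ₁ * ℵ₀ := by
        gcongr
        · exact hS.le
        · exact ciSup_le' fun y ↦ le_aleph0_iff_set_countable.2 (hf y)
      _ = ℵ₁ := aleph_mul_aleph0 1
      _ < #α := h
  obtain ⟨x, hx⟩ : ∃ x, x ∉ ⋃ y ∈ S, f y := by
    by_contra! hcover
    rw [eq_univ_of_forall hcover, mk_univ] at hunion
    exact hunion.false
  obtain ⟨y, hyS, hyx⟩ : ∃ y ∈ S, y ∉ f x := by
    by_contra! hsub
    have hS_countable : S.Countable := (hf x).mono hsub
    rw [← le_aleph0_iff_set_countable, hS] at hS_countable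
    exact aleph0_lt_aleph_one.not_ge hS_countable
  exact ⟨x, y, fun hxy ↦ hx (mem_biUnion hyS hxy), hyx⟩

theorem forall_countable_exists_notMem_and_notMem_iff {α : Type u} :
    (∀ f : α → Set α, (∀ x, (f x).Countable) → ∃ x y, x ∉ f y ∧ y ∉ f x) ↔ ℵ₁ < #α := by
  refine ⟨fun hax ↦ ?_, exists_notMem_and_notMem_of_aleph_one_lt_mk⟩
  by_contra! h
  obtain ⟨f, hf, htotal⟩ := exists_countable_forall_mem_or_mem_of_mk_le_aleph_one h
  obtain ⟨x, y, hxy, hyx⟩ := hax f hf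
  exact (htotal x y).elim hxy hyx

theorem aleph_one_lt_continuum_univ_iff :
    ℵ₁ < continuum.{u} ↔ ℵ₁ < continuum.{0} := by
  rw [← lift_lt.{0, u} (a := ℵ₁), lift_aleph, Ordinal.lift_one, lift_continuum]

end Cardinal

/-- Freiling's axiom is equivalent to the negation of the continuum hypothesis (7.6(8)):
for every `f : ℝ → Set ℝ` with all values countable there exist reals `x, y` with
`x ∉ f y` and `y ∉ f x`, if and only if `ℵ₁ < 2 ^ ℵ₀`. -/
theorem freiling_axiom_iff_not_CH :
    (∀ f : ℝ → Set ℝ, (∀ x : ℝ, (f x).Countable) →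
      ∃ x y : ℝ, x ∉ f y ∧ y ∉ f x) ↔
    Cardinal.aleph 1 < Cardinal.continuum := by
  rw [forall_countable_exists_notMem_and_notMem_iff, mk_real]
  exact aleph_one_lt_continuum_univ_iff.symm
end

section
/- Distributivity of the lattice of bands (Section 6.1): Let E be a vector lattice (a lattice-ordered real vector space). For all bands L, K, N of E (i.e., sets of the form M^⊥) one has L ∩ (K ∪ N)^⊥⊥ = ((L ∩ K) ∪ (L ∩ N))^⊥⊥; i.e., the inclusion-ordered set B(E) of bands, with meet L ∧ K = L ∩ K and join L ∨ K = (L ∪ K)^⊥⊥, is a distributive lattice. -/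
/-- The disjoint complement `M^⊥` of a subset `M` of a vector lattice. -/
def disjComp {E : Type*} [Lattice E] [AddCommGroup E] (M : Set E) : Set E :=
  {x : E | ∀ y ∈ M, |x| ⊓ |y| = 0}

/-- A band of a vector lattice: a set of the form `M^⊥`. -/
def IsBand {E : Type*} [Lattice E] [AddCommGroup E] (L : Set E) : Prop :=
  ∃ M : Set E, L = disjComp M

/-!
Bands are solid, and for bands `L`, `K` an element of `L` disjoint from `L ∩ K` is disjoint
from `K`: if `k ∈ K`, then `w := |z| ⊓ |k|` lies in `L ∩ K` and below `|z|`, so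
`w = |z| ⊓ w = 0`. Given `x ∈ L ∩ (K ∪ N)^⊥⊥` and `y ∈ ((L ∩ K) ∪ (L ∩ N))^⊥`, the element
`z := |x| ⊓ |y|` thus lies in both `(K ∪ N)^⊥` and `(K ∪ N)^⊥⊥`, hence vanishes. The reverse
inclusion holds because `L ∩ (K ∪ N)^⊥⊥ = (M ∪ (K ∪ N)^⊥)^⊥` is itself a band, for `L = M^⊥`.
-/

section Order

variable {E : Type*} [Lattice E] [AddCommGroup E]

lemma disjComp_anti {A B : Set E} (h : A ⊆ B) : disjComp B ⊆ disjComp A :=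
  fun _ hx y hy => hx y (h hy)

lemma subset_disjComp_disjComp (A : Set E) : A ⊆ disjComp (disjComp A) :=
  fun x hx y hy => inf_comm |x| |y| ▸ hy x hx

lemma disjComp_union (A B : Set E) :
    disjComp (A ∪ B) = disjComp A ∩ disjComp B := by
  ext x
  simp only [disjComp, Set.mem_union, Set.mem_inter_iff, Set.mem_ofPred_eq, or_imp, forall_and]

lemma disjComp_disjComp_disjComp (M : Set E) :
    disjComp (disjComp (disjComp M)) = disjComp M :=
  (disjComp_anti (subset_disjComp_disjComp M)).antisymm (subset_disjComp_disjComp _)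

lemma IsBand.disjComp_disjComp {L : Set E} (hL : IsBand L) : disjComp (disjComp L) = L := by
  obtain ⟨M, rfl⟩ := hL
  exact disjComp_disjComp_disjComp M

lemma isBand_disjComp (M : Set E) : IsBand (disjComp M) := ⟨M, rfl⟩

lemma IsBand.inter {L K : Set E} (hL : IsBand L) (hK : IsBand K) : IsBand (L ∩ K) := by
  obtain ⟨M, rfl⟩ := hL
  obtain ⟨P, rfl⟩ := hK
  exact ⟨M ∪ P, (disjComp_union M P).symm⟩

lemma disjComp_disjComp_subset_of_subset_isBand {A L : Set E} (hL : IsBand L) (h : A ⊆ L) :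
    disjComp (disjComp A) ⊆ L :=
  hL.disjComp_disjComp ▸ disjComp_anti (disjComp_anti h)

end Order

section Solid

variable {E : Type*} [Lattice E] [AddCommGroup E] [AddLeftMono E]

open LatticeOrderedAddCommGroup

lemma isSolid_disjComp (M : Set E) : IsSolid (disjComp M) := by
  intro x hx z hz y hy
  refine le_antisymm ?_ (le_inf (abs_nonneg z) (abs_nonneg y))
  exact (inf_le_inf_right _ hz).trans_eq (hx y hy)

lemma IsBand.isSolid {L : Set E} (hL : IsBand L) : IsSolid L := by
  obtain ⟨M, rfl⟩ := hL
  exact isSolid_disjComp M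

lemma eq_zero_of_mem_of_mem_disjComp {M : Set E} {z : E} (hM : z ∈ M) (hM' : z ∈ disjComp M) :
    z = 0 := by
  have hz : |z| = 0 := by simpa only [inf_idem] using hM' z hM
  exact le_antisymm (hz ▸ le_abs_self z) (neg_nonpos.mp (hz ▸ neg_le_abs z))

lemma IsBand.inter_disjComp_inter_subset_disjComp {L K : Set E} (hL : IsBand L)
    (hK : IsBand K) : L ∩ disjComp (L ∩ K) ⊆ disjComp K := by
  rintro z ⟨hzL, hzLK⟩ k hk
  set w := |z| ⊓ |k|
  have hw : |w| = w := abs_of_nonneg (le_inf (abs_nonneg z) (abs_nonneg k))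
  have hwz : |w| ≤ |z| := hw.le.trans inf_le_left
  have hwLK : w ∈ L ∩ K := ⟨hL.isSolid hzL hwz, hK.isSolid hk (hw.le.trans inf_le_right)⟩
  calc w = |z| ⊓ |w| := ((inf_eq_right.mpr hwz).trans hw).symm
    _ = 0 := hzLK w hwLK

end Solid

theorem band_lattice_distrib_general {E : Type*} [Lattice E] [AddCommGroup E]
    [CovariantClass E E (· + ·) (· ≤ ·)]
    (L K N : Set E) (hL : IsBand L) (hK : IsBand K) (hN : IsBand N) :
    L ∩ disjComp (disjComp (K ∪ N)) =
      disjComp (disjComp ((L ∩ K) ∪ (L ∩ N))) := by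
  refine subset_antisymm ?_ ?_
  · rintro x ⟨hxL, hxKN⟩ y hy
    set z := |x| ⊓ |y|
    have hz : |z| = z := abs_of_nonneg (le_inf (abs_nonneg x) (abs_nonneg y))
    have hzx : |z| ≤ |x| := hz.le.trans inf_le_left
    have hzL : z ∈ L := hL.isSolid hxL hzx
    have hz_biperp : z ∈ disjComp (disjComp (K ∪ N)) := isSolid_disjComp _ hxKN hzx
    have hzLKN : z ∈ disjComp (L ∩ K) ∩ disjComp (L ∩ N) :=
      disjComp_union (L ∩ K) (L ∩ N) ▸ isSolid_disjComp _ hy (hz.le.trans inf_le_right)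
    have hz_perp : z ∈ disjComp (K ∪ N) := disjComp_union K N ▸
      ⟨hL.inter_disjComp_inter_subset_disjComp hK ⟨hzL, hzLKN.1⟩,
        hL.inter_disjComp_inter_subset_disjComp hN ⟨hzL, hzLKN.2⟩⟩
    exact eq_zero_of_mem_of_mem_disjComp hz_perp hz_biperp
  · refine disjComp_disjComp_subset_of_subset_isBand (hL.inter (isBand_disjComp _)) ?_
    exact Set.union_subset
      (Set.inter_subset_inter_right L ((subset_disjComp_disjComp _).trans' Set.subset_union_left))
      (Set.inter_subset_inter_right L ((subset_disjComp_disjComp _).trans' Set.subset_union_right))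

/-- Distributivity of the lattice of bands (Section 6.1): in a vector lattice `E`, for
all bands `L`, `K`, `N` one has `L ∩ (K ∪ N)^⊥⊥ = ((L ∩ K) ∪ (L ∩ N))^⊥⊥`; i.e. the
lattice of bands, with meet the intersection and join `(L ∪ K)^⊥⊥`, is distributive. -/
theorem band_lattice_distrib {E : Type*} [Lattice E] [AddCommGroup E] [Module ℝ E]
    [CovariantClass E E (· + ·) (· ≤ ·)] [PosSMulMono ℝ E]
    (L K N : Set E) (hL : IsBand L) (hK : IsBand K) (hN : IsBand N) :
    L ∩ disjComp (disjComp (K ∪ N)) =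
      disjComp (disjComp ((L ∩ K) ∪ (L ∩ N))) :=
  band_lattice_distrib_general L K N hL hK hN
end
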